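/- For every α ∈ M_m(ℂ) and every Hermitian matrix δ ∈ M_m(ℂ) (δᴴ = δ), the function ℝ → ℝ given by t ↦ ‖exp(tδ) · α · exp(−tδ)‖², where ‖·‖ is the Frobenius norm and exp is the matrix exponential, is convex on ℝ. -/

import Mathlib

/-!
Diagonalize `δ = U D U*` with `U` unitary and `D = diag(d)` real. Then
`exp(tδ) α exp(-tδ) = U (e^{tD} β e^{-tD}) U*` with `β = U* α U`, and since the
Frobenius norm is unitarily invariant, `‖α_t‖² = ∑ᵢⱼ |βᵢⱼ|² e^{2(dᵢ - dⱼ)t}`: a nonnegative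
combination of exponentials of linear functions of `t`, hence convex.
-/

open Matrix

/-- The Frobenius norm of a complex `m × m` matrix. -/
noncomputable def frobNorm {m : ℕ} (A : Matrix (Fin m) (Fin m) ℂ) : ℝ :=
  Real.sqrt (∑ i, ∑ j, ‖A i j‖ ^ 2)

/-- The matrix exponential `exp A = ∑ₖ Aᵏ / k!`. -/
noncomputable def mexp {m : ℕ} (A : Matrix (Fin m) (Fin m) ℂ) :
    Matrix (Fin m) (Fin m) ℂ :=
  ∑' k : ℕ, ((k.factorial : ℂ)⁻¹) • (A ^ k)

section ConvexSum

variable {𝕜 E β ι : Type*} [Semiring 𝕜] [PartialOrder 𝕜] [AddCommMonoid E]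
  [AddCommMonoid β] [PartialOrder β] [IsOrderedAddMonoid β] [SMul 𝕜 E] [Module 𝕜 β] {s : Set E}

theorem ConvexOn.finset_sum (hs : Convex 𝕜 s) (t : Finset ι) {f : ι → E → β}
    (hf : ∀ i ∈ t, ConvexOn 𝕜 s (f i)) : ConvexOn 𝕜 s fun x ↦ ∑ i ∈ t, f i x := by
  classical
  induction t using Finset.induction_on with
  | empty => simpa using convexOn_const 0 hs
  | insert i t hi ih =>
    simp_rw [Finset.sum_insert hi]
    exact (hf i (t.mem_insert_self i)).add (ih fun j hj ↦ hf j (Finset.mem_insert_of_mem hj))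

end ConvexSum

theorem convexOn_sum_mul_exp_mul {ι : Type*} (s : Finset ι) {c : ι → ℝ}
    (hc : ∀ i ∈ s, 0 ≤ c i) (a : ι → ℝ) :
    ConvexOn ℝ Set.univ fun t ↦ ∑ i ∈ s, c i * Real.exp (a i * t) :=
  ConvexOn.finset_sum convex_univ s fun i hi ↦
    (convexOn_exp.comp_linearMap (LinearMap.mulLeft ℝ (a i))).smul (hc i hi)

namespace Matrix

variable {n : Type*} [Fintype n]

theorem sum_norm_sq_eq_re_trace {𝕜 : Type*} [RCLike 𝕜] (A : Matrix n n 𝕜) :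
    ∑ i, ∑ j, ‖A i j‖ ^ 2 = RCLike.re (Aᴴ * A).trace := by
  simp only [trace, diag, mul_apply, conjTranspose_apply, map_sum, RCLike.star_def,
    RCLike.conj_mul]
  rw [Finset.sum_comm]
  norm_cast

variable [DecidableEq n]

theorem sum_norm_sq_conj_of_star_mul_self {𝕜 : Type*} [RCLike 𝕜] {U : Matrix n n 𝕜}
    (hU : star U * U = 1) (A : Matrix n n 𝕜) :
    ∑ i, ∑ j, ‖(U * A * star U) i j‖ ^ 2 = ∑ i, ∑ j, ‖A i j‖ ^ 2 := by
  have hconj : (U * A * star U)ᴴ * (U * A * star U) = U * (Aᴴ * A) * star U := by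
    simp only [← star_eq_conjTranspose, star_mul, star_star, Matrix.mul_assoc,
      ← Matrix.mul_assoc (star U) U, hU, Matrix.one_mul]
  rw [sum_norm_sq_eq_re_trace, sum_norm_sq_eq_re_trace, hconj, trace_mul_cycle, hU,
    Matrix.one_mul]

theorem exp_unitary_conj {𝕜 : Type*} [RCLike 𝕜] (U : unitaryGroup n 𝕜) (A : Matrix n n 𝕜) :
    NormedSpace.exp ((U : Matrix n n 𝕜) * A * star (U : Matrix n n 𝕜)) =
      U * NormedSpace.exp A * star (U : Matrix n n 𝕜) :=
  exp_units_conj (Unitary.toUnits U) A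

namespace IsHermitian

variable {A : Matrix n n ℂ} (hA : A.IsHermitian)
include hA

theorem exp_smul_eq (t : ℝ) :
    NormedSpace.exp (t • A) = (hA.eigenvectorUnitary : Matrix n n ℂ) *
      diagonal (fun i ↦ Complex.exp ↑(t * hA.eigenvalues i)) *
        star (hA.eigenvectorUnitary : Matrix n n ℂ) := by
  conv_lhs => rw [hA.spectral_theorem, Unitary.conjStarAlgAut_apply, ← smul_mul_assoc,
    ← mul_smul_comm, ← diagonal_smul]
  rw [exp_unitary_conj, exp_diagonal, Pi.exp_def]
  simp only [Complex.coe_algebraMap, Pi.smul_apply, Function.comp_apply, Complex.real_smul,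
    ← Complex.exp_eq_exp_ℂ, Complex.ofReal_mul]

theorem sum_norm_sq_exp_conj (α : Matrix n n ℂ) (t : ℝ) :
    ∑ i, ∑ j, ‖(NormedSpace.exp (t • A) * α * NormedSpace.exp (-(t • A))) i j‖ ^ 2 =
      ∑ i, ∑ j,
        ‖(star (hA.eigenvectorUnitary : Matrix n n ℂ) * α * hA.eigenvectorUnitary) i j‖ ^ 2 *
          Real.exp (2 * (hA.eigenvalues i - hA.eigenvalues j) * t) := by
  set U : Matrix n n ℂ := ↑hA.eigenvectorUnitary
  set d := hA.eigenvalues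
  set D : ℝ → Matrix n n ℂ := fun τ ↦ diagonal fun i ↦ Complex.exp ↑(τ * d i)
  have hconj : U * D t * star U * α * (U * D (-t) * star U) =
      U * (D t * (star U * α * U) * D (-t)) * star U := by
    simp only [Matrix.mul_assoc]
  rw [← neg_smul, hA.exp_smul_eq, hA.exp_smul_eq, hconj,
    sum_norm_sq_conj_of_star_mul_self (Unitary.coe_star_mul_self _)]
  refine Finset.sum_congr rfl fun i _ ↦ Finset.sum_congr rfl fun j _ ↦ ?_
  have hexp :
      Real.exp (2 * (d i - d j) * t) = (Real.exp (t * d i) * Real.exp (-t * d j)) ^ 2 := by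
    rw [← Real.exp_add, ← Real.exp_nat_mul]
    ring_nf
  rw [mul_diagonal, diagonal_mul, norm_mul, norm_mul, Complex.norm_exp_ofReal,
    Complex.norm_exp_ofReal, hexp]
  ring

end IsHermitian

end Matrix

theorem mexp_eq_exp {m : ℕ} (A : Matrix (Fin m) (Fin m) ℂ) : mexp A = NormedSpace.exp A := by
  rw [NormedSpace.exp_eq_tsum ℂ]
  rfl

theorem frobNorm_sq {m : ℕ} (A : Matrix (Fin m) (Fin m) ℂ) :
    frobNorm A ^ 2 = ∑ i, ∑ j, ‖A i j‖ ^ 2 :=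
  Real.sq_sqrt (by positivity)

/-- The convexity computation in the proof of Lemma 5.1: for any matrix `α`
and any Hermitian matrix `δ`, the function
`t ↦ ‖exp(tδ) α exp(−tδ)‖²` (Frobenius norm) is convex on `ℝ`. -/
theorem stmt_6 (m : ℕ) (α δ : Matrix (Fin m) (Fin m) ℂ) (hδ : δᴴ = δ) :
    ConvexOn ℝ Set.univ
      (fun t : ℝ => frobNorm (mexp (t • δ) * α * mexp (-(t • δ))) ^ 2) := by
  have hδ_herm : δ.IsHermitian := hδ
  simp only [frobNorm_sq, mexp_eq_exp, hδ_herm.sum_norm_sq_exp_conj, ← Fintype.sum_prod_type']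
  exact convexOn_sum_mul_exp_mul _ (fun _ _ ↦ sq_nonneg _) _
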